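/- Let β > 0 and x ∈ ℝ. Then there exists a unique θ̲ ∈ ℝ satisfying θ̲ = Φ(√β·(x − θ̲)), and this θ̲ lies in (0,1). Moreover, the critical partisan share α*(θ) := (θ − Φ(√β·(x − θ)))/(1 − Φ(√β·(x − θ))) satisfies α*(θ) > 0 if and only if θ > θ̲. -/

import Mathlib

open Real Set MeasureTheory

/-- The standard normal density `φ(t) = exp(−t²/2)/√(2π)`. -/
noncomputable def stdNormalPDF (t : ℝ) : ℝ :=
  Real.exp (-(t ^ 2) / 2) / Real.sqrt (2 * Real.pi)

/-- The standard normal cumulative distribution function `Φ`. -/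
noncomputable def stdNormalCDF (x : ℝ) : ℝ :=
  ∫ t in Set.Iic x, stdNormalPDF t

/- The fixed point `θ̲` of `θ ↦ Φ(√β (x - θ))` is the zero of `θ ↦ θ - Φ(√β (x - θ))`, which is
strictly increasing because `Φ` is monotone, negative at `0` and positive at `1` because `Φ` takes
values in `(0, 1)`. The denominator of `α*(θ)` is positive for the same reason, so the sign of
`α*(θ)` is the sign of `θ - θ̲`. -/

theorem stdNormalPDF_pos (t : ℝ) : 0 < stdNormalPDF t := by
  unfold stdNormalPDF
  positivity

theorem stdNormalPDF_eq_gaussian :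
    stdNormalPDF = fun t => exp (-(1 / 2 : ℝ) * t ^ 2) / √(2 * π) := by
  funext t
  unfold stdNormalPDF
  ring_nf

theorem integrable_stdNormalPDF : Integrable stdNormalPDF := by
  rw [stdNormalPDF_eq_gaussian]
  exact (integrable_exp_neg_mul_sq (by norm_num)).div_const _

theorem integral_stdNormalPDF : ∫ t, stdNormalPDF t = 1 := by
  rw [stdNormalPDF_eq_gaussian, integral_div, integral_gaussian, div_eq_one_iff_eq (by positivity)]
  ring_nf

theorem setIntegral_stdNormalPDF_pos {s : Set ℝ} (h : volume s ≠ 0) :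
    0 < ∫ t in s, stdNormalPDF t := by
  rw [setIntegral_pos_iff_support_of_nonneg_ae
    (Filter.Eventually.of_forall fun t => (stdNormalPDF_pos t).le)
    integrable_stdNormalPDF.integrableOn]
  have hsupp : Function.support stdNormalPDF = univ :=
    eq_univ_of_forall fun t => (stdNormalPDF_pos t).ne'
  rwa [hsupp, univ_inter, pos_iff_ne_zero]

theorem stdNormalCDF_pos (y : ℝ) : 0 < stdNormalCDF y :=
  setIntegral_stdNormalPDF_pos (by simp [volume_Iic])

theorem stdNormalCDF_lt_one (y : ℝ) : stdNormalCDF y < 1 := by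
  have hsplit := intervalIntegral.integral_Iic_add_Ioi (b := y)
    integrable_stdNormalPDF.integrableOn integrable_stdNormalPDF.integrableOn
  have htail := setIntegral_stdNormalPDF_pos (s := Ioi y) (by simp [volume_Ioi])
  rw [integral_stdNormalPDF] at hsplit
  rw [stdNormalCDF]
  linarith

theorem monotone_stdNormalCDF : Monotone stdNormalCDF := fun _ _ hab =>
  setIntegral_mono_set integrable_stdNormalPDF.integrableOn
    (Filter.Eventually.of_forall fun t => (stdNormalPDF_pos t).le)
    (Filter.Eventually.of_forall (Iic_subset_Iic.2 hab))

theorem stdNormalCDF_eq_intervalIntegral_add (y : ℝ) :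
    stdNormalCDF y = (∫ t in (0 : ℝ)..y, stdNormalPDF t) + stdNormalCDF 0 := by
  have h := intervalIntegral.integral_Iic_sub_Iic (a := 0) (b := y)
    integrable_stdNormalPDF.integrableOn integrable_stdNormalPDF.integrableOn
  rw [stdNormalCDF, stdNormalCDF]
  linarith

@[fun_prop]
theorem continuous_stdNormalCDF : Continuous stdNormalCDF :=
  ((integrable_stdNormalPDF.continuous_primitive 0).add continuous_const).congr
    fun y => (stdNormalCDF_eq_intervalIntegral_add y).symm

theorem exists_unique_fixedPoint_of_antitone {f : ℝ → ℝ} (hf : Antitone f) (hc : Continuous f)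
    (h0 : 0 < f 0) (h1 : f 1 < 1) :
    ∃ a ∈ Ioo (0 : ℝ) 1, a = f a ∧ (∀ t, t = f t → t = a) ∧ ∀ t, 0 < t - f t ↔ a < t := by
  set g : ℝ → ℝ := fun t => t - f t
  have hg : StrictMono g := fun s t hst => by
    have := hf hst.le
    simp only [g]
    linarith
  obtain ⟨a, ha, hga⟩ : (0 : ℝ) ∈ g '' Ioo 0 1 :=
    intermediate_value_Ioo zero_le_one (continuous_id.sub hc).continuousOn
      ⟨by simpa [g] using h0, by simpa [g] using h1⟩
  refine ⟨a, ha, sub_eq_zero.1 hga, fun t ht => hg.injective ?_, fun t => ?_⟩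
  · change t - f t = g a
    rw [hga, ← ht, sub_self]
  · change 0 < g t ↔ a < t
    rw [← hga, hg.lt_iff_lt]

theorem lower_collapse_threshold_general
    (β x : ℝ) :
    ∃ tl : ℝ,
      tl = stdNormalCDF (Real.sqrt β * (x - tl)) ∧
      (∀ t : ℝ, t = stdNormalCDF (Real.sqrt β * (x - t)) → t = tl) ∧
      tl ∈ Set.Ioo (0 : ℝ) 1 ∧
      (∀ θ : ℝ,
        0 < (θ - stdNormalCDF (Real.sqrt β * (x - θ))) /
            (1 - stdNormalCDF (Real.sqrt β * (x - θ))) ↔ tl < θ) := by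
  have hanti : Antitone fun θ => stdNormalCDF (√β * (x - θ)) :=
    monotone_stdNormalCDF.comp_antitone fun _ _ hst =>
      mul_le_mul_of_nonneg_left (by linarith) (sqrt_nonneg β)
  have hcont : Continuous fun θ => stdNormalCDF (√β * (x - θ)) := by fun_prop
  obtain ⟨tl, hmem, hfix, huniq, hsign⟩ := exists_unique_fixedPoint_of_antitone hanti hcont
    (stdNormalCDF_pos _) (stdNormalCDF_lt_one _)
  refine ⟨tl, hfix, huniq, hmem, fun θ => ?_⟩
  rw [div_pos_iff_of_pos_right (sub_pos.2 (stdNormalCDF_lt_one _))]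
  exact hsign θ

/-- For `β > 0` and `x ∈ ℝ` there is a unique `θ̲` with
`θ̲ = Φ(√β(x − θ̲))`, it lies in `(0,1)`, and the critical partisan share
`α*(θ) = (θ − Φ(√β(x − θ)))/(1 − Φ(√β(x − θ)))` is positive iff `θ > θ̲`. -/
theorem lower_collapse_threshold
    (β x : ℝ) (hβ : 0 < β) :
    ∃ tl : ℝ,
      tl = stdNormalCDF (Real.sqrt β * (x - tl)) ∧
      (∀ t : ℝ, t = stdNormalCDF (Real.sqrt β * (x - t)) → t = tl) ∧
      tl ∈ Set.Ioo (0 : ℝ) 1 ∧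
      (∀ θ : ℝ,
        0 < (θ - stdNormalCDF (Real.sqrt β * (x - θ))) /
            (1 - stdNormalCDF (Real.sqrt β * (x - θ))) ↔ tl < θ) :=
  lower_collapse_threshold_general β x
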